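/- Let (L, γ, α) be a Hom-Lie coalgebra and (M, β) an L-comodule with structure map Γ: M → L⊗M. Then Γ̃ = (α²⊗Id_M)∘Γ is the structure map of another L-comodule structure on (M, β). -/

import Mathlib

open TensorProduct

/-- Flip on a tensor product. -/
noncomputable def tauT (K A B : Type*) [Field K] [AddCommGroup A] [Module K A]
    [AddCommGroup B] [Module K B] : A ⊗[K] B →ₗ[K] B ⊗[K] A :=
  (TensorProduct.comm K A B).toLinearMap

/-- Cyclic permutation x₁⊗x₂⊗x₃ ↦ x₃⊗x₁⊗x₂ on A⊗(A⊗A). -/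
noncomputable def cyc (K A : Type*) [Field K] [AddCommGroup A] [Module K A] :
    A ⊗[K] (A ⊗[K] A) →ₗ[K] A ⊗[K] (A ⊗[K] A) :=
  (TensorProduct.comm K (A ⊗[K] A) A).toLinearMap ∘ₗ
    (TensorProduct.assoc K A A A).symm.toLinearMap

/-- τ⊗Id acting on the first two factors of A⊗(A⊗M). -/
noncomputable def swap12 (K A M : Type*) [Field K] [AddCommGroup A] [Module K A]
    [AddCommGroup M] [Module K M] : A ⊗[K] (A ⊗[K] M) →ₗ[K] A ⊗[K] (A ⊗[K] M) :=
  (TensorProduct.assoc K A A M).toLinearMap ∘ₗ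
    TensorProduct.map (tauT K A A) LinearMap.id ∘ₗ
      (TensorProduct.assoc K A A M).symm.toLinearMap

/-- Comodule over a Hom-coassociative coalgebra (C, δ, α). -/
def IsHomComodule (K C M : Type*) [Field K] [AddCommGroup C] [Module K C]
    [AddCommGroup M] [Module K M] (δ : C →ₗ[K] C ⊗[K] C) (α : C →ₗ[K] C)
    (Δ : M →ₗ[K] C ⊗[K] M) (β : M →ₗ[K] M) : Prop :=
  Δ ∘ₗ β = TensorProduct.map α β ∘ₗ Δ ∧
  TensorProduct.map α Δ ∘ₗ Δ =
    (TensorProduct.assoc K C C M).toLinearMap ∘ₗ TensorProduct.map δ β ∘ₗ Δ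

/-- Comodule over a Hom-Lie coalgebra (L, γ, α). -/
def IsHomLieComodule (K L M : Type*) [Field K] [AddCommGroup L] [Module K L]
    [AddCommGroup M] [Module K M] (γ : L →ₗ[K] L ⊗[K] L) (α : L →ₗ[K] L)
    (Γ : M →ₗ[K] L ⊗[K] M) (β : M →ₗ[K] M) : Prop :=
  Γ ∘ₗ β = TensorProduct.map α β ∘ₗ Γ ∧
  (TensorProduct.assoc K L L M).toLinearMap ∘ₗ TensorProduct.map γ β ∘ₗ Γ =
    TensorProduct.map α Γ ∘ₗ Γ - swap12 K L M ∘ₗ TensorProduct.map α Γ ∘ₗ Γ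

/-- Hom-Poisson comodule over (A, δ, γ, α). -/
def IsHomPoissonComodule (K A M : Type*) [Field K] [AddCommGroup A] [Module K A]
    [AddCommGroup M] [Module K M] (δ γ : A →ₗ[K] A ⊗[K] A) (α : A →ₗ[K] A)
    (Δ Γ : M →ₗ[K] A ⊗[K] M) (β : M →ₗ[K] M) : Prop :=
  IsHomComodule K A M δ α Δ β ∧
  IsHomLieComodule K A M γ α Γ β ∧
  TensorProduct.map α Δ ∘ₗ Γ =
    (TensorProduct.assoc K A A M).toLinearMap ∘ₗ TensorProduct.map γ β ∘ₗ Δ +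
      swap12 K A M ∘ₗ TensorProduct.map α Γ ∘ₗ Δ ∧
  (TensorProduct.assoc K A A M).toLinearMap ∘ₗ TensorProduct.map δ β ∘ₗ Γ =
    TensorProduct.map α Γ ∘ₗ Δ + swap12 K A M ∘ₗ TensorProduct.map α Γ ∘ₗ Δ

/-- Cocommutative Hom-Poisson coalgebra. -/
def IsCocommHomPoissonCoalgebra (K A : Type*) [Field K] [AddCommGroup A] [Module K A]
    (δ γ : A →ₗ[K] A ⊗[K] A) (α : A →ₗ[K] A) : Prop :=
  δ = tauT K A A ∘ₗ δ ∧
  δ ∘ₗ α = TensorProduct.map α α ∘ₗ δ ∧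
  TensorProduct.map α δ ∘ₗ δ =
    (TensorProduct.assoc K A A A).toLinearMap ∘ₗ TensorProduct.map δ α ∘ₗ δ ∧
  γ = -(tauT K A A ∘ₗ γ) ∧
  γ ∘ₗ α = TensorProduct.map α α ∘ₗ γ ∧
  (LinearMap.id + cyc K A + cyc K A ∘ₗ cyc K A) ∘ₗ TensorProduct.map α γ ∘ₗ γ = 0 ∧
  TensorProduct.map α δ ∘ₗ γ =
    (TensorProduct.assoc K A A A).toLinearMap ∘ₗ TensorProduct.map γ α ∘ₗ δ +
      swap12 K A A ∘ₗ TensorProduct.map α γ ∘ₗ δ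

/-! The square α² commutes with α and with the cobracket (`γ ∘ α² = (α² ⊗ α²) ∘ γ`), and
twisting a coaction by any such map `f` preserves both comodule axioms: `f ⊗ f ⊗ id` commutes with the associator
and with the flip of the first two factors, so it can be pulled out of every term. -/

section

variable {K L M : Type*} [Field K] [AddCommGroup L] [Module K L] [AddCommGroup M] [Module K M]

lemma assoc_comp_map_map_id (f g : L →ₗ[K] L) :
    (TensorProduct.assoc K L L M).toLinearMap ∘ₗ map (map f g) LinearMap.id =
      map f (map g LinearMap.id) ∘ₗ (TensorProduct.assoc K L L M).toLinearMap :=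
  TensorProduct.ext_threefold fun _ _ _ => rfl

lemma swap12_comp_map_map_id (f : L →ₗ[K] L) :
    swap12 K L M ∘ₗ map f (map f LinearMap.id) = map f (map f LinearMap.id) ∘ₗ swap12 K L M :=
  TensorProduct.ext_threefold' fun _ _ _ => rfl

theorem IsHomLieComodule.map_comp_coaction {γ : L →ₗ[K] L ⊗[K] L} {α : L →ₗ[K] L}
    {Γ : M →ₗ[K] L ⊗[K] M} {β : M →ₗ[K] M} (f : L →ₗ[K] L) (hαf : α ∘ₗ f = f ∘ₗ α)
    (hγf : γ ∘ₗ f = map f f ∘ₗ γ) (h : IsHomLieComodule K L M γ α Γ β) :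
    IsHomLieComodule K L M γ α (map f LinearMap.id ∘ₗ Γ) β := by
  obtain ⟨hβ, hΓ⟩ := h
  set F : L ⊗[K] (L ⊗[K] M) →ₗ[K] L ⊗[K] (L ⊗[K] M) := map f (map f LinearMap.id)
  have hα : map α (map f LinearMap.id ∘ₗ Γ) ∘ₗ map f LinearMap.id = F ∘ₗ map α Γ := by
    rw [← map_comp, LinearMap.comp_id, hαf, map_comp]
  have hγ : map γ β ∘ₗ map f LinearMap.id = map (map f f) LinearMap.id ∘ₗ map γ β := by
    rw [← map_comp, hγf, LinearMap.comp_id, ← LinearMap.id_comp β, map_comp, LinearMap.id_comp]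
  constructor
  · calc (map f LinearMap.id ∘ₗ Γ) ∘ₗ β = map (f ∘ₗ α) β ∘ₗ Γ := by
          rw [LinearMap.comp_assoc, hβ, ← LinearMap.comp_assoc, ← map_comp, LinearMap.id_comp]
      _ = map α β ∘ₗ map f LinearMap.id ∘ₗ Γ := by
          rw [← hαf, ← LinearMap.comp_assoc, ← map_comp, LinearMap.comp_id]
  · calc (TensorProduct.assoc K L L M).toLinearMap ∘ₗ map γ β ∘ₗ map f LinearMap.id ∘ₗ Γ
        = F ∘ₗ (TensorProduct.assoc K L L M).toLinearMap ∘ₗ map γ β ∘ₗ Γ := by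
          rw [← LinearMap.comp_assoc Γ, hγ, LinearMap.comp_assoc, ← LinearMap.comp_assoc _ _
            (TensorProduct.assoc K L L M).toLinearMap, assoc_comp_map_map_id,
            LinearMap.comp_assoc]
      _ = F ∘ₗ map α Γ ∘ₗ Γ - swap12 K L M ∘ₗ F ∘ₗ map α Γ ∘ₗ Γ := by
          rw [hΓ, LinearMap.comp_sub, ← LinearMap.comp_assoc _ F, swap12_comp_map_map_id,
            LinearMap.comp_assoc]
      _ = _ := by
          simp only [← LinearMap.comp_assoc, hα]

end

theorem stmt17_general {K L M : Type*} [Field K] [AddCommGroup L] [Module K L]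
    [AddCommGroup M] [Module K M]
    (γ : L →ₗ[K] L ⊗[K] L) (α : L →ₗ[K] L)
    (hlie : γ = -(tauT K L L ∘ₗ γ) ∧
      γ ∘ₗ α = TensorProduct.map α α ∘ₗ γ ∧
      (LinearMap.id + cyc K L + cyc K L ∘ₗ cyc K L) ∘ₗ TensorProduct.map α γ ∘ₗ γ = 0)
    (Γ : M →ₗ[K] L ⊗[K] M) (β : M →ₗ[K] M)
    (hcom : IsHomLieComodule K L M γ α Γ β) :
    IsHomLieComodule K L M γ α (TensorProduct.map (α ∘ₗ α) LinearMap.id ∘ₗ Γ) β := by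
  obtain ⟨-, hγα, -⟩ := hlie
  refine hcom.map_comp_coaction (α ∘ₗ α) rfl ?_
  rw [← LinearMap.comp_assoc, hγα, LinearMap.comp_assoc, hγα, ← LinearMap.comp_assoc, ← map_comp]

theorem stmt17 {K L M : Type*} [Field K] [CharZero K] [AddCommGroup L] [Module K L]
    [AddCommGroup M] [Module K M]
    (γ : L →ₗ[K] L ⊗[K] L) (α : L →ₗ[K] L)
    (hlie : γ = -(tauT K L L ∘ₗ γ) ∧
      γ ∘ₗ α = TensorProduct.map α α ∘ₗ γ ∧
      (LinearMap.id + cyc K L + cyc K L ∘ₗ cyc K L) ∘ₗ TensorProduct.map α γ ∘ₗ γ = 0)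
    (Γ : M →ₗ[K] L ⊗[K] M) (β : M →ₗ[K] M)
    (hcom : IsHomLieComodule K L M γ α Γ β) :
    IsHomLieComodule K L M γ α (TensorProduct.map (α ∘ₗ α) LinearMap.id ∘ₗ Γ) β :=
  stmt17_general γ α hlie Γ β hcom
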